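/- Suppose f_out(·;θ) is linear and the cross-entropy loss for target class k is CE(p, y) = y_k·log(p_k). Then the gradient ∇_θ CE(f_out(e_v;θ), y_v) with e_v = Σ_{w∈V_v} π(v,w)x_w equals the weighted sum Σ_{w∈V_v} α_w · ∇_θ CE(f_out(x_w;θ), y_v), where α_w = f_out(x_w;θ)_k · π(v,w) / Σ_{u∈V_v} f_out(π(v,u)x_u;θ)_k, provided all f_out(x_w;θ)_k and the denominator are positive. -/

import Mathlib

/-!
The loss is the logarithm of `θ ↦ f_out(e_v;θ)_k = ∑_w π(v,w) f_out(x_w;θ)_k`, and the logarithmic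
derivative of such a combination is the combination of the logarithmic derivatives of its terms,
each weighted by that term's share `π(v,w) f_out(x_w;θ)_k / f_out(e_v;θ)_k` of the total; these shares
are the `α_w`.
-/

/-- The linear output function `f_out(x;θ) = θ x` with parameter matrix θ. -/
noncomputable def foutLin {b C : ℕ} (θ : Fin C → Fin b → ℝ) (z : Fin b → ℝ) : Fin C → ℝ :=
  fun k => ∑ j, θ k j * z j

open Finset

theorem fderiv_log_sum_mul_eq_sum_smul_fderiv_log {E ι : Type*} [NormedAddCommGroup E]
    [NormedSpace ℝ E] [Fintype ι] (c : ι → ℝ) (f : ι → E → ℝ) (x : E)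
    (hf : ∀ i, DifferentiableAt ℝ (f i) x) (hfx : ∀ i, f i x ≠ 0)
    (hsum : ∑ i, c i * f i x ≠ 0) :
    fderiv ℝ (fun y => Real.log (∑ i, c i * f i y)) x
      = ∑ i, (f i x * c i / ∑ j, c j * f j x) • fderiv ℝ (fun y => Real.log (f i y)) x := by
  have hlin : HasFDerivAt (fun y => ∑ i, c i * f i y) (∑ i, c i • fderiv ℝ (f i) x) x :=
    HasFDerivAt.fun_sum fun i _ => ((hf i).hasFDerivAt.const_mul (c i))
  rw [(hlin.log hsum).fderiv, smul_sum]
  refine sum_congr rfl fun i _ => ?_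
  rw [((hf i).hasFDerivAt.log (hfx i)).fderiv, smul_smul, smul_smul]
  congr 1
  field_simp [hfx i]

theorem foutLin_smul {b C : ℕ} (θ : Fin C → Fin b → ℝ) (c : ℝ) (z : Fin b → ℝ) (k : Fin C) :
    foutLin θ (c • z) k = c * foutLin θ z k := by
  simp only [foutLin, Pi.smul_apply, smul_eq_mul, mul_sum]
  exact sum_congr rfl fun _ _ => by ring

theorem foutLin_sum {ι : Type*} {b C : ℕ} (θ : Fin C → Fin b → ℝ) (s : Finset ι)
    (z : ι → Fin b → ℝ) (k : Fin C) :
    foutLin θ (∑ i ∈ s, z i) k = ∑ i ∈ s, foutLin θ (z i) k := by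
  simp only [foutLin, Finset.sum_apply, mul_sum]
  exact sum_comm

theorem differentiable_foutLin_apply {b C : ℕ} (z : Fin b → ℝ) (k : Fin C) :
    Differentiable ℝ (fun θ : Fin C → Fin b → ℝ => foutLin θ z k) := by
  unfold foutLin
  fun_prop

theorem pdgnn_pseudo_training_gradient_general
    {V : Type*} [Fintype V] {b C : ℕ}
    (x : V → Fin b → ℝ) (π : V → V → ℝ) (v : V)
    (y : Fin C → ℝ) (k : Fin C)
    (θ₀ : Fin C → Fin b → ℝ)
    (e : Fin b → ℝ) (he : e = ∑ w : V, π v w • x w)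
    (hpos : ∀ w : V, 0 < foutLin θ₀ (x w) k)
    (hden : 0 < ∑ u : V, foutLin θ₀ (π v u • x u) k)
    (α : V → ℝ)
    (hα : ∀ w : V, α w =
      foutLin θ₀ (x w) k * π v w / ∑ u : V, foutLin θ₀ (π v u • x u) k) :
    fderiv ℝ (fun θ : Fin C → Fin b → ℝ => y k * Real.log (foutLin θ e k)) θ₀
      = ∑ w : V, α w •
          fderiv ℝ (fun θ : Fin C → Fin b → ℝ => y k * Real.log (foutLin θ (x w) k)) θ₀ := by
  have he_comb : ∀ θ, foutLin θ e k = ∑ w, π v w * foutLin θ (x w) k := fun θ => by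
    simp only [he, foutLin_sum, foutLin_smul]
  simp only [foutLin_smul] at hden hα
  have hscale : ∀ g : (Fin C → Fin b → ℝ) → ℝ,
      fderiv ℝ (fun θ => y k * g θ) θ₀ = y k • fderiv ℝ g θ₀ :=
    fun g => congrFun (fderiv_const_smul_field (f := g) (y k)) θ₀
  simp only [hscale, he_comb, hα]
  rw [fderiv_log_sum_mul_eq_sum_smul_fderiv_log _ _ _ (fun w => differentiable_foutLin_apply _ _ _)
    (fun w => (hpos w).ne') hden.ne', smul_sum]
  exact sum_congr rfl fun w _ => smul_comm _ _ _

/-- pseudo-training, Theorem 1.2: for linear `f_out` and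
cross-entropy loss `CE(p,y) = y_k · log p_k`, the gradient w.r.t. θ of the loss
on the topology-aware embedding `e_v = ∑ w, π v w • x w` equals the weighted sum
of the gradients of the losses on the individual (pseudo-labeled) node features,
with adaptive weights `α_w`. -/
theorem pdgnn_pseudo_training_gradient
    {V : Type*} [Fintype V] {b C : ℕ}
    (x : V → Fin b → ℝ) (π : V → V → ℝ) (v : V)
    (y : Fin C → ℝ) (k : Fin C) (hy : y k = 1)
    (θ₀ : Fin C → Fin b → ℝ)
    (e : Fin b → ℝ) (he : e = ∑ w : V, π v w • x w)
    (hpos : ∀ w : V, 0 < foutLin θ₀ (x w) k)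
    (hden : 0 < ∑ u : V, foutLin θ₀ (π v u • x u) k)
    (α : V → ℝ)
    (hα : ∀ w : V, α w =
      foutLin θ₀ (x w) k * π v w / ∑ u : V, foutLin θ₀ (π v u • x u) k) :
    fderiv ℝ (fun θ : Fin C → Fin b → ℝ => y k * Real.log (foutLin θ e k)) θ₀
      = ∑ w : V, α w •
          fderiv ℝ (fun θ : Fin C → Fin b → ℝ => y k * Real.log (foutLin θ (x w) k)) θ₀ :=
  pdgnn_pseudo_training_gradient_general x π v y k θ₀ e he hpos hden α hα
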